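/- For t ∈ [0, π/(2f̄)), the functions u(x,y,t) = f̄ y, v(x,y,t) = f̄ y sec(f̄ t) - f̄ y tan(f̄ t) + x·d/dt[sec(f̄ t) - tan(f̄ t)], h(x,y,t) = (h₀/f̄)·d/dt[tan(f̄ t) - sec(f̄ t)] satisfy the rotating shallow water equations over a flat bottom, with initial conditions u(x,y,0) = f̄ y, v(x,y,0) = -f̄ x + f̄ y, h(x,y,0) = h₀. -/

import Mathlib

open Real

/-!
Write `φ = sec - tan` and `ψ = sec · φ`. Then `φ' = -ψ`, `ψ' = -φ ψ`, and `1 + tan² = sec²` gives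
`2 ψ = 1 + φ²`, a Riccati equation for `φ`. For an affine vortex `u = f y`, `v = f y g(t) + x q(t)`,
`h = k(t)` the `u`-equation is an identity, the `v`-equation splits into its `y`-part
`2 q = -f (1 + g²)` and its `x`-part `q' = -f g q`, and the `h`-equation reads `k' = -f g k`;
all three hold for `g(s) = φ(f s)`, `q(s) = -f ψ(f s)`, `k(s) = h₀ ψ(f s)`.
-/

def SolvesShallowWaterAt (f F : ℝ) (u v h : ℝ → ℝ → ℝ → ℝ) (x y t : ℝ) : Prop :=
  deriv (fun s => u x y s) t =
      -(u x y t) * deriv (fun a => u a y t) x - v x y t * deriv (fun b => u x b t) y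
        - (1 / F ^ 2) * deriv (fun a => h a y t) x + f * v x y t ∧
    deriv (fun s => v x y s) t =
      -(u x y t) * deriv (fun a => v a y t) x - v x y t * deriv (fun b => v x b t) y
        - (1 / F ^ 2) * deriv (fun b => h x b t) y - f * u x y t ∧
    deriv (fun s => h x y s) t =
      -(deriv (fun a => u a y t * h a y t) x) - deriv (fun b => v x b t * h x b t) y

theorem solvesShallowWaterAt_affineVortex {f F t : ℝ} {g q k : ℝ → ℝ}
    (hg : HasDerivAt g (q t) t) (hq : HasDerivAt q (-f * g t * q t) t)
    (hk : HasDerivAt k (-f * g t * k t) t) (hriccati : 2 * q t = -f * (1 + g t ^ 2))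
    (x y : ℝ) :
    SolvesShallowWaterAt f F (fun _ y _ => f * y) (fun x y t => f * y * g t + x * q t)
      (fun _ _ t => k t) x y t := by
  have hvt : HasDerivAt (fun s => f * y * g s + x * q s) (f * y * q t + x * (-f * g t * q t)) t :=
    (hg.const_mul _).add (hq.const_mul _)
  have hvx : HasDerivAt (fun a => f * y * g t + a * q t) (q t) x :=
    (hasDerivAt_mul_const (q t)).const_add _
  have hvy : HasDerivAt (fun b => f * b * g t + x * q t) (f * g t) y := by
    simpa using (((hasDerivAt_id y).const_mul f).mul_const (g t)).add_const (x * q t)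
  refine ⟨?_, ?_, ?_⟩ <;> beta_reduce
  · simp only [deriv_const', deriv_const_mul_id']
    ring
  · rw [hvt.deriv, hvx.deriv, hvy.deriv, deriv_const']
    linear_combination (f * y) * hriccati
  · rw [hk.deriv, deriv_const', (hvy.mul_const (k t)).deriv]
    ring

theorem solvesShallowWaterAt_riccatiVortex {f F c t : ℝ} {φ ψ : ℝ → ℝ}
    (hφ : HasDerivAt φ (-ψ (f * t)) (f * t))
    (hψ : HasDerivAt ψ (-(φ (f * t) * ψ (f * t))) (f * t))
    (hriccati : 2 * ψ (f * t) = 1 + φ (f * t) ^ 2) (x y : ℝ) :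
    SolvesShallowWaterAt f F (fun _ y _ => f * y)
      (fun x y t => f * y * φ (f * t) + x * (-f * ψ (f * t)))
      (fun _ _ t => c * ψ (f * t)) x y t := by
  have hf := hasDerivAt_const_mul (x := t) f
  have hg : HasDerivAt (fun s => φ (f * s)) (-f * ψ (f * t)) t :=
    (hφ.comp t hf).congr_deriv (by ring)
  have hq : HasDerivAt (fun s => -f * ψ (f * s)) (-f * φ (f * t) * (-f * ψ (f * t))) t :=
    ((hψ.comp t hf).const_mul (-f)).congr_deriv (by ring)
  have hk : HasDerivAt (fun s => c * ψ (f * s)) (-f * φ (f * t) * (c * ψ (f * t))) t :=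
    ((hψ.comp t hf).const_mul c).congr_deriv (by ring)
  exact solvesShallowWaterAt_affineVortex hg hq hk (by linear_combination (-f) * hriccati) x y

noncomputable def sec (z : ℝ) : ℝ := 1 / cos z

theorem hasDerivAt_sec {z : ℝ} (hz : cos z ≠ 0) : HasDerivAt sec (sec z * tan z) z := by
  have h := (hasDerivAt_cos z).inv hz
  rw [show cos⁻¹ = sec by funext; simp [sec]] at h
  refine h.congr_deriv ?_
  rw [sec, tan_eq_sin_div_cos]
  field_simp

theorem sec_sq {z : ℝ} (hz : cos z ≠ 0) : sec z ^ 2 = 1 + tan z ^ 2 := by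
  rw [sec, tan_eq_sin_div_cos]
  field_simp
  linear_combination (sin_sq_add_cos_sq z).symm

theorem hasDerivAt_sec_sub_tan {z : ℝ} (hz : cos z ≠ 0) :
    HasDerivAt (fun z => sec z - tan z) (-(sec z * (sec z - tan z))) z := by
  refine ((hasDerivAt_sec hz).sub (hasDerivAt_tan hz)).congr_deriv ?_
  rw [show 1 / cos z ^ 2 = sec z ^ 2 by simp [sec]]
  ring

theorem hasDerivAt_sec_mul_sec_sub_tan {z : ℝ} (hz : cos z ≠ 0) :
    HasDerivAt (fun z => sec z * (sec z - tan z))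
      (-((sec z - tan z) * (sec z * (sec z - tan z)))) z :=
  ((hasDerivAt_sec hz).mul (hasDerivAt_sec_sub_tan hz)).congr_deriv (by ring)

theorem two_mul_sec_mul_sec_sub_tan {z : ℝ} (hz : cos z ≠ 0) :
    2 * (sec z * (sec z - tan z)) = 1 + (sec z - tan z) ^ 2 := by
  linear_combination sec_sq hz

theorem cos_mul_pos_of_mem_Ico {f t : ℝ} (hf : 0 < f) (ht : t ∈ Set.Ico 0 (π / (2 * f))) :
    0 < cos (f * t) := by
  have : t * (2 * f) < π := (lt_div_iff₀ (by positivity)).1 ht.2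
  exact cos_pos_of_mem_Ioo ⟨by nlinarith [pi_pos, ht.1], by linarith⟩

theorem stmt_4_general (fbar F h₀ : ℝ) (hf : 0 < fbar)
    (u v h : ℝ → ℝ → ℝ → ℝ)
    (hu : ∀ x y t, u x y t = fbar * y)
    (hv : ∀ x y t, v x y t =
      fbar * y * (1 / Real.cos (fbar * t)) - fbar * y * Real.tan (fbar * t)
        + x * (fbar * (1 / Real.cos (fbar * t)) * Real.tan (fbar * t)
                - fbar * (1 / Real.cos (fbar * t)) ^ 2))
    (hh : ∀ x y t, h x y t =
      (h₀ / fbar) * (fbar * (1 / Real.cos (fbar * t)) ^ 2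
        - fbar * (1 / Real.cos (fbar * t)) * Real.tan (fbar * t))) :
    (∀ x y, ∀ t ∈ Set.Ico (0 : ℝ) (Real.pi / (2 * fbar)),
      deriv (fun s => u x y s) t =
        -(u x y t) * deriv (fun a => u a y t) x - v x y t * deriv (fun b => u x b t) y
          - (1 / F ^ 2) * deriv (fun a => h a y t) x + fbar * v x y t) ∧
    (∀ x y, ∀ t ∈ Set.Ico (0 : ℝ) (Real.pi / (2 * fbar)),
      deriv (fun s => v x y s) t =
        -(u x y t) * deriv (fun a => v a y t) x - v x y t * deriv (fun b => v x b t) y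
          - (1 / F ^ 2) * deriv (fun b => h x b t) y - fbar * u x y t) ∧
    (∀ x y, ∀ t ∈ Set.Ico (0 : ℝ) (Real.pi / (2 * fbar)),
      deriv (fun s => h x y s) t =
        -(deriv (fun a => u a y t * h a y t) x) - deriv (fun b => v x b t * h x b t) y) ∧
    (∀ x y, u x y 0 = fbar * y ∧ v x y 0 = -(fbar * x) + fbar * y ∧ h x y 0 = h₀) := by
  have hcos : ∀ t ∈ Set.Ico (0 : ℝ) (π / (2 * fbar)), cos (fbar * t) ≠ 0 := fun t ht =>
    (cos_mul_pos_of_mem_Ico hf ht).ne'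
  have hsol : ∀ x y, ∀ t ∈ Set.Ico (0 : ℝ) (π / (2 * fbar)),
      SolvesShallowWaterAt fbar F u v h x y t := by
    obtain rfl : u = fun _ y _ => fbar * y := by
      funext x y t
      exact hu x y t
    obtain rfl : v = fun x y t => fbar * y * (sec (fbar * t) - tan (fbar * t))
        + x * (-fbar * (sec (fbar * t) * (sec (fbar * t) - tan (fbar * t)))) := by
      funext x y t
      rw [hv, sec]
      ring
    obtain rfl : h = fun _ _ t => h₀ * (sec (fbar * t) * (sec (fbar * t) - tan (fbar * t))) := by
      funext x y t
      rw [hh, sec]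
      generalize 1 / cos (fbar * t) = S
      field_simp
    intro x y t ht
    exact solvesShallowWaterAt_riccatiVortex (φ := fun z => sec z - tan z)
      (ψ := fun z => sec z * (sec z - tan z)) (hasDerivAt_sec_sub_tan (hcos t ht))
      (hasDerivAt_sec_mul_sec_sub_tan (hcos t ht)) (two_mul_sec_mul_sec_sub_tan (hcos t ht)) x y
  refine ⟨fun x y t ht => (hsol x y t ht).1, fun x y t ht => (hsol x y t ht).2.1,
    fun x y t ht => (hsol x y t ht).2.2, fun x y => ⟨hu x y 0, ?_, ?_⟩⟩
  · simp only [hv, mul_zero, cos_zero, tan_zero]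
    ring
  · simp [hh, hf.ne']

/-- Theorem 3.9(ii): anticyclonic vortex with finite escape time, Condition V.
Here sec θ = 1 / cos θ, d/dt tan(f̄ t) = f̄ sec²(f̄ t) and d/dt sec(f̄ t) = f̄ sec(f̄ t) tan(f̄ t). -/
theorem stmt_4 (fbar F h₀ : ℝ) (hf : 0 < fbar) (hF : F ≠ 0)
    (u v h : ℝ → ℝ → ℝ → ℝ)
    (hu : ∀ x y t, u x y t = fbar * y)
    (hv : ∀ x y t, v x y t =
      fbar * y * (1 / Real.cos (fbar * t)) - fbar * y * Real.tan (fbar * t)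
        + x * (fbar * (1 / Real.cos (fbar * t)) * Real.tan (fbar * t)
                - fbar * (1 / Real.cos (fbar * t)) ^ 2))
    (hh : ∀ x y t, h x y t =
      (h₀ / fbar) * (fbar * (1 / Real.cos (fbar * t)) ^ 2
        - fbar * (1 / Real.cos (fbar * t)) * Real.tan (fbar * t))) :
    (∀ x y, ∀ t ∈ Set.Ico (0 : ℝ) (Real.pi / (2 * fbar)),
      deriv (fun s => u x y s) t =
        -(u x y t) * deriv (fun a => u a y t) x - v x y t * deriv (fun b => u x b t) y
          - (1 / F ^ 2) * deriv (fun a => h a y t) x + fbar * v x y t) ∧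
    (∀ x y, ∀ t ∈ Set.Ico (0 : ℝ) (Real.pi / (2 * fbar)),
      deriv (fun s => v x y s) t =
        -(u x y t) * deriv (fun a => v a y t) x - v x y t * deriv (fun b => v x b t) y
          - (1 / F ^ 2) * deriv (fun b => h x b t) y - fbar * u x y t) ∧
    (∀ x y, ∀ t ∈ Set.Ico (0 : ℝ) (Real.pi / (2 * fbar)),
      deriv (fun s => h x y s) t =
        -(deriv (fun a => u a y t * h a y t) x) - deriv (fun b => v x b t * h x b t) y) ∧
    (∀ x y, u x y 0 = fbar * y ∧ v x y 0 = -(fbar * x) + fbar * y ∧ h x y 0 = h₀) :=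
  stmt_4_general fbar F h₀ hf u v h hu hv hh
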